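/- arXiv:math/9910030 — 4 statements merged into one kernel-verified Lean document; each statement's English description precedes it below -/
import Mathlib

section
/- Let R be a commutative ring, n ≥ 0 and ℓ ≥ 1 natural numbers, and let L₁,…,L_ℓ and P₁,…,P_ℓ be homogeneous polynomials of degree 1 in the polynomial ring R[X₀,…,X_n]. Then there exists an ℓ×ℓ matrix M, all of whose entries are homogeneous polynomials of degree 1 in R[X₀,…,X_n], such that det M = L₁⋯L_ℓ + P₁⋯P_ℓ. -/
/-!
For ℓ ≥ 2 take `M = diagonal L + diagonal P' * permMatrix c` with `c` the ℓ-cycle `finRotate ℓ`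
and `P'` equal to `P` except `P'₀ = sign c • P₀`. A permutation sending every `i` to `i` or to
`c i` is the identity or `c`, so only these two terms survive in the Leibniz expansion of
`det M`, and they give `∏ L` and `sign c * ∏ P' = ∏ P`. For ℓ = 1 take the matrix `(L₀ + P₀)`.
-/

open Equiv Matrix MvPolynomial

namespace Equiv.Perm

variable {α : Type*} [Finite α]

theorem eq_one_or_eq_of_forall_apply_eq_or_eq {c τ : Perm α} (hc : c.IsCycle)
    (hfix : ∀ x, c x ≠ x) (h : ∀ x, τ x = x ∨ τ x = c x) : τ = 1 ∨ τ = c := by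
  by_cases hτ : ∀ x, τ x = x
  · exact Or.inl (Equiv.ext hτ)
  obtain ⟨x, hx⟩ := not_forall.mp hτ
  have hstep : ∀ y, τ y = c y → τ (c y) = c (c y) := fun y hy =>
    (h (c y)).resolve_left fun hcy => hfix y (τ.injective (hcy.trans hy.symm))
  have hpow : ∀ k : ℕ, τ ((c ^ k) x) = c ((c ^ k) x) := by
    intro k
    induction k with
    | zero => exact (h x).resolve_left hx
    | succ k ih => rw [pow_succ', Perm.mul_apply]; exact hstep _ ih
  refine Or.inr (Equiv.ext fun y => ?_)
  obtain ⟨k, rfl⟩ := (hc.sameCycle (hfix x) (hfix y)).exists_nat_pow_eq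
  exact hpow k

end Equiv.Perm

namespace Matrix

variable {ι S : Type*} [Fintype ι] [DecidableEq ι] [CommRing S]

theorem diagonal_add_diagonal_mul_permMatrix_apply (c : Perm ι) (a b : ι → S) (i j : ι) :
    (diagonal a + diagonal b * c.permMatrix S) i j =
      (if i = j then a i else 0) + if c i = j then b i else 0 := by
  simp [diagonal_apply, PEquiv.toMatrix_apply]

theorem det_diagonal_add_diagonal_mul_permMatrix {c : Perm ι} (hc : c.IsCycle)
    (hfix : ∀ x, c x ≠ x) (a b : ι → S) :
    (diagonal a + diagonal b * c.permMatrix S).det = ∏ i, a i + Perm.sign c * ∏ i, b i := by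
  have hentry := diagonal_add_diagonal_mul_permMatrix_apply c a b
  rw [← det_transpose, det_apply, Finset.sum_eq_add (1 : Perm ι) c hc.ne_one.symm]
  · simp [hentry, hfix, (hfix _).symm, Units.smul_def]
  · intro τ _ hτ
    obtain ⟨i, hi, hci⟩ : ∃ i, τ i ≠ i ∧ τ i ≠ c i := by
      by_contra! h
      exact (Perm.eq_one_or_eq_of_forall_apply_eq_or_eq hc hfix
        fun x => or_iff_not_imp_left.2 (h x)).elim hτ.1 hτ.2
    rw [Finset.prod_eq_zero (Finset.mem_univ i), smul_zero]
    simp [hentry, hi.symm, hci.symm]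
  · simp
  · simp

end Matrix

/-- A sum of two products of linear forms is the determinant of a matrix of
linear forms. -/
theorem det_of_sum_of_products_of_linear_forms (R : Type*) [CommRing R]
    (n ℓ : ℕ) (hℓ : 1 ≤ ℓ) (L P : Fin ℓ → MvPolynomial (Fin (n + 1)) R)
    (hL : ∀ i, (L i).IsHomogeneous 1) (hP : ∀ i, (P i).IsHomogeneous 1) :
    ∃ M : Matrix (Fin ℓ) (Fin ℓ) (MvPolynomial (Fin (n + 1)) R),
      (∀ i j, (M i j).IsHomogeneous 1) ∧
      M.det = (∏ i, L i) + ∏ i, P i := by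
  match ℓ, hℓ with
  | 1, _ => exact ⟨of fun _ _ => L 0 + P 0, fun _ _ => (hL 0).add (hP 0), by simp⟩
  | m + 2, _ =>
    set c := finRotate (m + 2)
    have hfix : ∀ x, c x ≠ x := fun x => Perm.mem_support.1 (support_finRotate ▸ Finset.mem_univ x)
    let b := Function.update P 0 (Perm.sign c • P 0)
    have hb : ∀ i, (b i).IsHomogeneous 1 := by
      intro i
      simp only [b, Function.update_apply]
      split_ifs
      · rw [← mem_homogeneousSubmodule]
        exact Submodule.smul_of_tower_mem _ _ ((mem_homogeneousSubmodule _ _).2 (hP 0))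
      · exact hP i
    refine ⟨diagonal L + diagonal b * c.permMatrix _, fun i j => ?_, ?_⟩
    · rw [diagonal_add_diagonal_mul_permMatrix_apply]
      refine IsHomogeneous.add ?_ ?_ <;> split_ifs
      all_goals first | exact isHomogeneous_zero _ _ _ | exact hL i | exact hb i
    · have hsign : (Perm.sign c : MvPolynomial (Fin (n + 1)) R) * (Perm.sign c • P 0) = P 0 := by
        rw [Units.smul_def, zsmul_eq_mul, ← mul_assoc, ← Int.cast_mul, ← Units.val_mul,
          Int.units_mul_self, Units.val_one, Int.cast_one, one_mul]
      rw [det_diagonal_add_diagonal_mul_permMatrix isCycle_finRotate hfix,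
        Finset.prod_update_of_mem (Finset.mem_univ 0), ← mul_assoc, hsign,
        ← Finset.prod_eq_mul_prod_sdiff_singleton_of_mem (Finset.mem_univ 0) P]
end

section
/- Let k be an algebraically closed field and d ≥ 1 a natural number. There exists a d×d matrix M, all of whose entries are homogeneous polynomials of degree 1 in k[X₀,X₁,X₂], such that det M = X₀^d + X₁^d + X₂^d. -/
open MvPolynomial

/-- esymm commutes with mapping by a ring hom. -/
lemma esymm_map_ringHom {R S : Type*} [CommSemiring R] [CommSemiring S]
    (f : R →+* S) (s : Multiset R) (n : ℕ) :
    (s.map f).esymm n = f (s.esymm n) := by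
  simp only [Multiset.esymm, Multiset.powersetCard_map, Multiset.map_map,
    map_multiset_sum, Function.comp_def, map_multiset_prod]

/-- Determinant of the cyclic bidiagonal matrix: diagonal `a`, superdiagonal `b`,
and lower-left corner `c`. -/
lemma det_cyclic_bidiagonal {R : Type*} [CommRing R] (n : ℕ)
    (a : Fin (n + 1) → R) (b c : R) :
    (Matrix.of fun i j : Fin (n + 1) =>
        (if j = i then a i else 0) +
          (if i = Fin.last n ∧ j = 0 then c
            else if (j : ℕ) = (i : ℕ) + 1 then b else 0)).det
      = (-1) ^ n * c * b ^ n + ∏ i, a i := by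
  classical
  set U : Matrix (Fin (n + 1)) (Fin (n + 1)) R :=
    Matrix.of fun i j => (if j = i then a i else 0) +
      (if (j : ℕ) = (i : ℕ) + 1 then b else 0) with hU
  have hM : (Matrix.of fun i j : Fin (n + 1) =>
      (if j = i then a i else 0) +
        (if i = Fin.last n ∧ j = 0 then c
          else if (j : ℕ) = (i : ℕ) + 1 then b else 0))
      = U.updateRow (Fin.last n) (Pi.single 0 c + Pi.single (Fin.last n) (a (Fin.last n))) := by
    ext i j
    by_cases hi : i = Fin.last n
    · subst hi
      have hb : ¬ ((j : ℕ) = (Fin.last n : ℕ) + 1) := by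
        have := j.isLt
        simp only [Fin.val_last]
        omega
      simp only [Matrix.updateRow_self, Matrix.of_apply, hb, if_false, Pi.add_apply,
        Pi.single_apply]
      by_cases hj0 : j = 0 <;> by_cases hjl : j = Fin.last n <;>
        simp [hj0, hjl] <;> ring
    · simp [Matrix.updateRow_ne hi, hU, hi]
  rw [hM, Matrix.det_updateRow_add]
  have hdiag : (U.updateRow (Fin.last n) (Pi.single (Fin.last n) (a (Fin.last n)))).det
      = ∏ i, a i := by
    rw [Matrix.det_of_upperTriangular]
    · refine Finset.prod_congr rfl fun i _ => ?_
      by_cases hi : i = Fin.last n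
      · subst hi; simp [Matrix.updateRow_self]
      · have : ¬ ((i : ℕ) = (i : ℕ) + 1) := by omega
        simp [Matrix.updateRow_ne hi, hU, this]
    · intro i j hij
      by_cases hi : i = Fin.last n
      · subst hi
        rw [Matrix.updateRow_self]
        have : j ≠ Fin.last n := ne_of_lt hij
        simp [Pi.single_apply, this]
      · have h1 : j ≠ i := ne_of_lt hij
        have h2 : ¬ ((j : ℕ) = (i : ℕ) + 1) := by
          have : (j : ℕ) < (i : ℕ) := hij
          omega
        simp [Matrix.updateRow_ne hi, hU, h1, h2]
  have hcorner : (U.updateRow (Fin.last n) (Pi.single 0 c)).det = (-1) ^ n * c * b ^ n := by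
    rw [Matrix.det_succ_row _ (Fin.last n)]
    rw [Finset.sum_eq_single (0 : Fin (n + 1))]
    · have hminor : ((U.updateRow (Fin.last n) (Pi.single 0 c)).submatrix
          (Fin.last n).succAbove (0 : Fin (n + 1)).succAbove).det = b ^ n := by
        rw [Matrix.det_of_lowerTriangular]
        · calc (∏ i : Fin n, ((U.updateRow (Fin.last n) (Pi.single 0 c)).submatrix
                (Fin.last n).succAbove (0 : Fin (n + 1)).succAbove) i i)
              = ∏ _i : Fin n, b := by
                refine Finset.prod_congr rfl fun i _ => ?_
                have hne : i.castSucc ≠ Fin.last n := (Fin.castSucc_lt_last i).ne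
                have h1 : (i : Fin n).succ ≠ (i : Fin n).castSucc := by
                  intro h
                  have := congrArg (Fin.val) h
                  simp at this
                simp [Matrix.submatrix_apply, Fin.succAbove_last, Fin.succAbove_zero,
                  Matrix.updateRow_ne hne, hU, h1]
            _ = b ^ n := by simp
        · intro i j hij
          have hne : i.castSucc ≠ Fin.last n := (Fin.castSucc_lt_last i).ne
          have hlt : (i : ℕ) < (j : ℕ) := hij
          have h1 : (j : Fin n).succ ≠ (i : Fin n).castSucc := by
            intro h
            have := congrArg (Fin.val) h
            simp at this
            omega
          have h2 : ¬ (((j : Fin n).succ : ℕ) = ((i.castSucc : Fin (n+1)) : ℕ) + 1) := by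
            simp only [Fin.val_succ, Fin.coe_castSucc]
            omega
          simp [Matrix.submatrix_apply, Fin.succAbove_last, Fin.succAbove_zero,
            Matrix.updateRow_ne hne, hU, h1, h2]
          intro h
          exact absurd h (by omega)
      rw [hminor]
      simp [Matrix.updateRow_self, Pi.single_apply, Fin.val_last]
    · intro j _ hj
      have : (Pi.single (0 : Fin (n + 1)) c : Fin (n + 1) → R) j = 0 :=
        Pi.single_eq_of_ne hj _
      simp [Matrix.updateRow_self, this]
    · intro h
      exact absurd (Finset.mem_univ _) h
  rw [hdiag, hcorner]

/-- Factoring a sum of two `d`-th powers into linear forms, from a factorization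
of `X^d + 1` into linear polynomials. -/
lemma prod_linear_eq_add_pow {k : Type*} [Field k] (d : ℕ) (hd : 1 ≤ d)
    (s : Multiset k) (hcard : Multiset.card s = d)
    (hp : (s.map fun r => Polynomial.X - Polynomial.C r).prod = Polynomial.X ^ d + 1) :
    (s.map fun r => (X 1 : MvPolynomial (Fin 3) k) - C r * X 2).prod
      = X 1 ^ d + X 2 ^ d := by
  classical
  set B := MvPolynomial (Fin 3) k
  -- values of the elementary symmetric functions of `s`
  have hesymm : ∀ j ≤ d, s.esymm j
      = (-1 : k) ^ j * (Polynomial.X ^ d + 1 : Polynomial k).coeff (d - j) := by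
    intro j hj
    have h1 : d - j ≤ Multiset.card s := by omega
    have h2 := Multiset.prod_X_sub_C_coeff s h1
    rw [hp] at h2
    rw [hcard] at h2
    have hdj : d - (d - j) = j := by omega
    rw [hdj] at h2
    have hsq : ((-1 : k) ^ j) * ((-1 : k) ^ j) = 1 := by
      rw [← mul_pow]; norm_num
    calc s.esymm j = (((-1 : k) ^ j) * ((-1 : k) ^ j)) * s.esymm j := by
          rw [hsq, one_mul]
      _ = (-1 : k) ^ j * ((Polynomial.X ^ d + 1 : Polynomial k).coeff (d - j)) := by
          rw [mul_assoc, ← h2]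
  set w : B := -(X 2) with hw
  -- elementary symmetric functions of the scaled multiset
  have hs' : ∀ j, (s.map fun r => w * C r).esymm j = w ^ j * C (s.esymm j) := by
    intro j
    have h3 := Multiset.pow_smul_esymm w j (s.map (C : k →+* B))
    rw [Multiset.map_map] at h3
    simp only [Function.comp_def, smul_eq_mul] at h3
    rw [← h3, esymm_map_ringHom]
  have hcard' : Multiset.card (s.map fun r => w * C r) = d := by
    rw [Multiset.card_map, hcard]
  have hprod := Multiset.prod_X_add_C_eq_sum_esymm (s.map fun r => w * C r)
  rw [hcard'] at hprod
  have hsum : (∑ j ∈ Finset.range (d + 1),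
      Polynomial.C ((s.map fun r => w * C r).esymm j) * Polynomial.X ^ (d - j))
      = Polynomial.X ^ d + Polynomial.C ((X 2 : B) ^ d) := by
    have hcongr : ∀ j ∈ Finset.range (d + 1),
        Polynomial.C ((s.map fun r => w * C r).esymm j) * Polynomial.X ^ (d - j)
        = (if j = 0 then (Polynomial.X : Polynomial B) ^ d else 0)
          + (if j = d then Polynomial.C ((X 2 : B) ^ d) else 0) := by
      intro j hj
      rw [Finset.mem_range] at hj
      have hdne : d ≠ 0 := by omega
      by_cases hj0 : j = 0
      · subst hj0
        have h0 : s.esymm 0 = 1 := by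
          rw [hesymm 0 (by omega)]
          simp [Polynomial.coeff_X_pow, Polynomial.coeff_one, hdne]
        rw [hs', h0]
        simp [hdne, (show ¬(0 : ℕ) = d by omega)]
      by_cases hjd : j = d
      · have h0 : s.esymm j = (-1 : k) ^ d := by
          rw [hjd, hesymm d le_rfl]
          simp [Polynomial.coeff_X_pow, Polynomial.coeff_one, hdne,
            (show ¬(0 : ℕ) = d by omega)]
        have hsqB : ((-1 : B) ^ d) * ((-1 : B) ^ d) = 1 := by
          rw [← mul_pow]; norm_num
        have hwd : w ^ d * C ((-1 : k) ^ d) = (X 2 : B) ^ d := by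
          rw [hw, map_pow, map_neg, map_one, neg_pow]
          calc (-1 : B) ^ d * X 2 ^ d * (-1 : B) ^ d
              = ((-1 : B) ^ d * (-1 : B) ^ d) * X 2 ^ d := by ring
            _ = X 2 ^ d := by rw [hsqB, one_mul]
        rw [hs', h0, hjd, hwd]
        simp [hdne]
      · have h0 : s.esymm j = 0 := by
          rw [hesymm j (by omega)]
          have hne1 : ¬ d - j = d := by omega
          have hne2 : ¬ d - j = 0 := by omega
          simp [Polynomial.coeff_X_pow, Polynomial.coeff_one, hne1, hne2]
        rw [hs', h0]
        simp [hj0, hjd]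
    rw [Finset.sum_congr rfl hcongr, Finset.sum_add_distrib,
      Finset.sum_ite_eq' (Finset.range (d + 1)) (0 : ℕ),
      Finset.sum_ite_eq' (Finset.range (d + 1)) d]
    simp [Finset.mem_range, Nat.lt_succ_self, (by omega : 0 < d + 1)]
  have h2 := hprod.trans hsum
  have h3 := congrArg (Polynomial.eval (X 1 : B)) h2
  rw [Polynomial.eval_multiset_prod, Multiset.map_map] at h3
  simp only [Function.comp_def, Polynomial.eval_add, Polynomial.eval_X,
    Polynomial.eval_C, Polynomial.eval_pow, Polynomial.eval_one,
    Multiset.map_map] at h3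
  have hmap : (s.map fun r => (X 1 : B) - C r * X 2)
      = s.map (fun r => (X 1 : B) + w * C r) :=
    Multiset.map_congr rfl (fun r _ => by rw [hw]; ring)
  rw [hmap]
  exact h3

/-- Over an algebraically closed field, the Fermat plane curve of degree `d`
admits a linear determinantal representation. -/
theorem fermat_plane_curve_linear_determinantal (k : Type*) [Field k]
    [IsAlgClosed k] (d : ℕ) (hd : 1 ≤ d) :
    ∃ M : Matrix (Fin d) (Fin d) (MvPolynomial (Fin 3) k),
      (∀ i j, (M i j).IsHomogeneous 1) ∧
      M.det = X 0 ^ d + X 1 ^ d + X 2 ^ d := by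
  classical
  obtain ⟨n, rfl⟩ : ∃ n, d = n + 1 := ⟨d - 1, by omega⟩
  set B := MvPolynomial (Fin 3) k
  set p : Polynomial k := Polynomial.X ^ (n + 1) + 1 with hp
  have hC1 : (Polynomial.C (1 : k)) = (1 : Polynomial k) := map_one _
  have hmon : p.Monic := by
    rw [hp, ← hC1]
    exact Polynomial.monic_X_pow_add_C _ (by omega)
  have hsplit : p.Splits := IsAlgClosed.splits p
  have hroots : p = (p.roots.map fun a => Polynomial.X - Polynomial.C a).prod :=
    hsplit.eq_prod_roots_of_monic hmon
  have hcard : Multiset.card p.roots = n + 1 := by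
    rw [Polynomial.splits_iff_card_roots.mp hsplit, hp, ← hC1,
      Polynomial.natDegree_X_pow_add_C]
  have hfact := prod_linear_eq_add_pow (k := k) (n + 1) (by omega) p.roots hcard hroots.symm
  set L : List k := p.roots.toList with hL
  have hlen : L.length = n + 1 := by rw [hL, Multiset.length_toList, hcard]
  set a : Fin (n + 1) → k := fun i => L.get (Fin.cast hlen.symm i) with ha
  set f : Fin (n + 1) → B := fun i => X 1 - C (a i) * X 2 with hf
  have hprodf : ∏ i : Fin (n + 1), f i = X 1 ^ (n + 1) + X 2 ^ (n + 1) := by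
    rw [← hfact]
    have e1 : p.roots = (L : Multiset k) := (Multiset.coe_toList p.roots).symm
    rw [e1, Multiset.map_coe, Multiset.prod_coe]
    have e2 : L.map (fun r => (X 1 : B) - C r * X 2)
        = List.ofFn (fun i : Fin L.length => (X 1 : B) - C (L.get i) * X 2) :=
      (List.ofFn_getElem_eq_map L _).symm
    rw [e2, List.prod_ofFn]
    exact (Fintype.prod_equiv (finCongr hlen)
      (fun i : Fin L.length => (X 1 : B) - C (L.get i) * X 2)
      f (fun i => rfl)).symm
  refine ⟨Matrix.of fun i j : Fin (n + 1) =>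
      (if j = i then f i else 0) +
        (if i = Fin.last n ∧ j = 0 then C ((-1 : k) ^ n) * X 0
          else if (j : ℕ) = (i : ℕ) + 1 then X 0 else 0), ?_, ?_⟩
  · intro i j
    simp only [Matrix.of_apply]
    apply MvPolynomial.IsHomogeneous.add
    · split_ifs with h
      · exact (isHomogeneous_X k 1).sub (isHomogeneous_C_mul_X _ _)
      · exact isHomogeneous_zero _ _ _
    · split_ifs with h h'
      · exact isHomogeneous_C_mul_X _ _
      · exact isHomogeneous_X k 0
      · exact isHomogeneous_zero _ _ _
  · rw [det_cyclic_bidiagonal n f (X 0) (C ((-1 : k) ^ n) * X 0), hprodf]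
    have h1 : ((-1 : B) ^ n) * (C ((-1 : k) ^ n) * X 0) * (X 0) ^ n
        = (X 0 : B) ^ (n + 1) := by
      rw [map_pow, map_neg, map_one]
      have hsq : ((-1 : B) ^ n) * ((-1 : B) ^ n) = 1 := by
        rw [← mul_pow]; norm_num
      calc ((-1 : B) ^ n) * (((-1 : B)) ^ n * X 0) * (X 0) ^ n
          = (((-1 : B) ^ n) * ((-1 : B) ^ n)) * (X 0) ^ (n + 1) := by ring
        _ = (X 0 : B) ^ (n + 1) := by rw [hsq, one_mul]
    rw [h1]
    ring
end

section
/- Let R be a commutative ring in which 2 is invertible, let ε ∈ R satisfy ε² = 1, and let M, A, B, C be n×n matrices over R satisfying Bᵀ·M = Mᵀ·Aᵀ and Bᵀ − ε·A = Mᵀ·C. Then the matrix A′ := A + (ε/2)·Mᵀ·C satisfies (A′·M)ᵀ = ε·(A′·M); that is, A′·M is ε-symmetric. -/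
/-!
Writing `P := A * M`, the hypotheses give `Pᵀ = ε • P + Mᵀ * C * M`, so that
`A' * M = P + (ε / 2) • (Pᵀ - ε • P) = (P + ε • Pᵀ) / 2` is the usual ε-symmetrization of `P`,
which is ε-symmetric as soon as `ε ^ 2 = 1`.
-/

open Matrix

namespace Matrix

variable {n R : Type*} [CommRing R]

theorem transpose_add_smul_transpose_self {ε : R} (hε : ε ^ 2 = 1) (P : Matrix n n R) :
    (P + ε • Pᵀ)ᵀ = ε • (P + ε • Pᵀ) := by
  rw [transpose_add, transpose_smul, transpose_transpose, smul_add, smul_smul, ← sq, hε,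
    one_smul, add_comm]

theorem transpose_mul_eq_smul_add [Fintype n] {ε : R} {M A B C : Matrix n n R}
    (h1 : Bᵀ * M = Mᵀ * Aᵀ) (h2 : Bᵀ - ε • A = Mᵀ * C) :
    (A * M)ᵀ = ε • (A * M) + Mᵀ * C * M := by
  rw [transpose_mul, ← h1, ← h2, sub_mul, smul_mul_assoc]
  abel

end Matrix

/-- The symmetrization step in the proof of Theorem B: if `Bᵀ M = Mᵀ Aᵀ` and
`Bᵀ - ε A = Mᵀ C`, then `A' := A + (ε/2) Mᵀ C` makes `A' M` ε-symmetric. -/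
theorem symmetrization_step (R : Type*) [CommRing R] [Invertible (2 : R)]
    (ε : R) (hε : ε ^ 2 = 1) (n : ℕ) (M A B C : Matrix (Fin n) (Fin n) R)
    (h1 : Bᵀ * M = Mᵀ * Aᵀ) (h2 : Bᵀ - ε • A = Mᵀ * C) :
    ((A + (ε * ⅟(2 : R)) • (Mᵀ * C)) * M)ᵀ
      = ε • ((A + (ε * ⅟(2 : R)) • (Mᵀ * C)) * M) := by
  have h_half : (A + (ε * ⅟(2 : R)) • (Mᵀ * C)) * M = ⅟(2 : R) • (A * M + ε • (A * M)ᵀ) := by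
    rw [transpose_mul_eq_smul_add h1 h2, add_mul, smul_mul_assoc]
    linear_combination (norm := module) (-⅟(2 : R) • hε - mul_invOf_self (2 : R)) • (A * M)
  rw [h_half, transpose_smul, transpose_add_smul_transpose_self hε, smul_comm]
end

section
/- Let k be an algebraically closed field with char k ≠ 2, and let F ∈ k[X₀,X₁,X₂] be a homogeneous polynomial of degree e ≥ 1 such that: (a) for every x ∈ k³ with x ≠ 0 and F(x) = 0, there is an index i with (∂F/∂X_i)(x) ≠ 0 (the plane curve F = 0 is smooth); (b) F(e_i) ≠ 0 for each standard basis vector e_i of k³ (the curve does not pass through the intersection point of any two coordinate axes); (c) for every x ∈ k³ with x ≠ 0, F(x) = 0 and x_i = 0 for some i, there is an index j ≠ i with (∂F/∂X_j)(x) ≠ 0 (the curve is transverse to the coordinate axes). Let G = F(X₀², X₁², X₂²) be the image of F under the k-algebra endomorphism of k[X₀,X₁,X₂] sending each X_i to X_i². Then for every y ∈ k³ with y ≠ 0 and G(y) = 0 there is an index i with (∂G/∂X_i)(y) ≠ 0; that is, the plane curve G = 0 (of degree 2e) is smooth. -/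
open MvPolynomial

/-- Chain rule for the substitution `Xⱼ ↦ Xⱼ²`. -/
lemma pderiv_aeval_sq {k : Type*} [CommRing k] (i : Fin 3) (p : MvPolynomial (Fin 3) k) :
    pderiv i ((aeval fun j : Fin 3 => (X j : MvPolynomial (Fin 3) k) ^ 2) p)
      = 2 * X i * (aeval fun j : Fin 3 => (X j : MvPolynomial (Fin 3) k) ^ 2) (pderiv i p) := by
  induction p using MvPolynomial.induction_on with
  | C a => simp
  | add p q hp hq => simp only [map_add, hp, hq]; ring
  | mul_X p j hp =>
      by_cases h : i = j
      · subst h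
        simp only [map_mul, map_add, aeval_X, pderiv_mul, hp, pderiv_pow, pderiv_X_self,
          map_pow, map_one]
        push_cast
        ring
      · simp only [map_mul, map_add, aeval_X, pderiv_mul, hp, pderiv_pow,
          pderiv_X_of_ne (Ne.symm h), pderiv_X_of_ne h, map_zero, mul_zero, add_zero, map_pow]
        ring

lemma eval_aeval_sq {k : Type*} [CommRing k] (y : Fin 3 → k) (p : MvPolynomial (Fin 3) k) :
    eval y ((aeval fun j : Fin 3 => (X j : MvPolynomial (Fin 3) k) ^ 2) p)
      = eval (fun j => y j ^ 2) p := by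
  rw [aeval_def, eval_eval₂,
    show ((eval y).comp (algebraMap k (MvPolynomial (Fin 3) k))) = RingHom.id k from
      RingHom.ext fun a => by simp]
  simp

lemma eval_smul_of_isHomogeneous {k : Type*} [CommRing k] {F : MvPolynomial (Fin 3) k} {e : ℕ}
    (hF : F.IsHomogeneous e) (c : k) (w : Fin 3 → k) :
    eval (c • w) F = c ^ e * eval w F := by
  rw [eval_eq', eval_eq', Finset.mul_sum]
  refine Finset.sum_congr rfl fun d hd => ?_
  have hdeg : ∑ i : Fin 3, d i = e := by
    have h := hF (mem_support_iff.mp hd)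
    rw [← h]
    simp only [Finsupp.weight_apply, Finsupp.sum, smul_eq_mul, Pi.one_apply, mul_one]
    exact (Finset.sum_subset (Finset.subset_univ _) (by
      intro i _ hi; simpa using Finsupp.notMem_support_iff.mp hi)).symm
  simp only [Pi.smul_apply, smul_eq_mul, mul_pow, Finset.prod_mul_distrib,
    Finset.prod_pow_eq_pow_sum, hdeg]
  ring

lemma fin3_aux : ∀ i j : Fin 3, i ≠ j → ∃ l : Fin 3, ∀ m : Fin 3, m = i ∨ m = j ∨ m = l := by
  decide

/-- Pulling back a smooth plane curve, transverse to the coordinate axes and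
avoiding the coordinate points, under `(X₀,X₁,X₂) ↦ (X₀²,X₁²,X₂²)` yields a
smooth plane curve. -/
theorem smooth_pullback_by_squares (k : Type*) [Field k] [IsAlgClosed k]
    (hchar : ringChar k ≠ 2) (e : ℕ) (he : 1 ≤ e)
    (F : MvPolynomial (Fin 3) k) (hF : F.IsHomogeneous e)
    (hsmooth : ∀ x : Fin 3 → k, x ≠ 0 → eval x F = 0 →
      ∃ i, eval x (pderiv i F) ≠ 0)
    (hcoord : ∀ i : Fin 3, eval (Pi.single i (1 : k)) F ≠ 0)
    (htrans : ∀ x : Fin 3 → k, x ≠ 0 → eval x F = 0 →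
      ∀ i : Fin 3, x i = 0 → ∃ j, j ≠ i ∧ eval x (pderiv j F) ≠ 0) :
    ∀ y : Fin 3 → k, y ≠ 0 →
      eval y ((aeval fun i : Fin 3 => (X i : MvPolynomial (Fin 3) k) ^ 2) F) = 0 →
      ∃ i, eval y
        (pderiv i ((aeval fun i : Fin 3 => (X i : MvPolynomial (Fin 3) k) ^ 2) F))
        ≠ 0 := by
  intro y hy hG
  have h2 : (2 : k) ≠ 0 := Ring.two_ne_zero hchar
  set x : Fin 3 → k := fun j => y j ^ 2 with hxdef
  have hx0 : x ≠ 0 := by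
    intro h
    apply hy
    funext j
    have := congrFun h j
    simpa [hxdef, pow_eq_zero_iff] using this
  have hFx : eval x F = 0 := by rw [← eval_aeval_sq]; exact hG
  have key : ∀ i : Fin 3, eval y
      (pderiv i ((aeval fun i : Fin 3 => (X i : MvPolynomial (Fin 3) k) ^ 2) F))
      = 2 * y i * eval x (pderiv i F) := by
    intro i
    rw [pderiv_aeval_sq, map_mul, map_mul, eval_aeval_sq]
    simp
    exact Or.inl rfl
  by_cases h0 : ∃ i, y i = 0
  · obtain ⟨i, hi⟩ := h0
    have hxi : x i = 0 := by simp [hxdef, hi]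
    obtain ⟨j, hji, hj⟩ := htrans x hx0 hFx i hxi
    have hyj : y j ≠ 0 := by
      intro hyj
      obtain ⟨l, hl⟩ := fin3_aux i j hji.symm
      have hxeq : x = (x l) • (Pi.single l 1 : Fin 3 → k) := by
        funext m
        have hxj : x j = 0 := by simp [hxdef, hyj]
        rcases hl m with rfl | rfl | rfl
        · rw [Pi.smul_apply, Pi.single_apply]
          split_ifs with h
          · subst h; simp [hxi]
          · simp [hxi]
        · rw [Pi.smul_apply, Pi.single_apply]
          split_ifs with h
          · subst h; simp [hxj]
          · simp [hxj]
        · simp [Pi.single_apply]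
      have hxl : x l ≠ 0 := by
        intro hxl
        apply hx0
        rw [hxeq, hxl, zero_smul]
      apply hcoord l
      have := eval_smul_of_isHomogeneous hF (x l) (Pi.single l 1 : Fin 3 → k)
      rw [← hxeq, hFx] at this
      exact (mul_eq_zero.mp this.symm).resolve_left (pow_ne_zero _ hxl)
    exact ⟨j, by rw [key j]; exact mul_ne_zero (mul_ne_zero h2 hyj) hj⟩
  · push_neg at h0
    obtain ⟨i, hi⟩ := hsmooth x hx0 hFx
    exact ⟨i, by rw [key i]; exact mul_ne_zero (mul_ne_zero h2 (h0 i)) hi⟩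
end
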